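/- arXiv:1111.3013 — 3 statements merged into one kernel-verified Lean document; each statement's English description precedes it below -/
import Mathlib

section
/- Let Val be a finite set with v = |Val| ≥ 2, let Z be a finite set, let ε > 0, and let M : Val → Z → ℝ be a channel matrix such that M a z ≤ exp(ε) · M a' z for ALL pairs a, a' ∈ Val and all z ∈ Z (i.e. M satisfies ε-differential privacy with respect to the clique adjacency on Val, as holds for the channel describing a single individual's value when all other database entries are fixed). Then ∑_{z ∈ Z} max_{a ∈ Val} M a z ≤ v · exp(ε) / (v − 1 + exp(ε)); equivalently, the min-entropy leakage about the individual satisfies I∞(V; Z) ≤ log₂(v · exp(ε) / (v − 1 + exp(ε))) for every input distribution. -/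
/-! If `a₀` maximizes column `z`, differential privacy gives `M a₀ z ≤ e^ε M a z` for every `a`,
so the column sum is at least `(1 + (v - 1) / e^ε) · max_a M a z`. Summing over `z`, the column
sums add up to the total of the row sums, which is `v`. -/

open Finset

theorem card_sub_one_add_mul_iSup_le_mul_sum {ι : Type*} [Fintype ι] [Nonempty ι]
    {f : ι → ℝ} {c : ℝ} (hf : ∀ i j, f i ≤ c * f j) :
    ((Fintype.card ι : ℝ) - 1 + c) * ⨆ i, f i ≤ c * ∑ i, f i := by
  obtain ⟨i₀, hi₀⟩ := Finite.exists_max f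
  have hsup : ⨆ i, f i = f i₀ :=
    le_antisymm (ciSup_le hi₀) (le_ciSup (Finite.bddAbove_range f) i₀)
  -- every term `c * f i - f i₀` is nonnegative, so the sum dominates the `i₀`-th one
  have key : c * f i₀ - f i₀ ≤ ∑ i, (c * f i - f i₀) :=
    single_le_sum (f := fun i => c * f i - f i₀) (fun i _ => sub_nonneg.2 (hf i₀ i))
      (mem_univ i₀)
  rw [sum_sub_distrib, ← mul_sum, sum_const, card_univ, nsmul_eq_mul] at key
  rw [hsup]
  linarith

theorem sum_iSup_le_of_forall_le_mul {A B : Type*} [Fintype A] [Nonempty A] [Fintype B]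
    {M : A → B → ℝ} (hrow : ∀ a, ∑ b, M a b = 1) {c : ℝ} (hc : 0 < c)
    (hM : ∀ a a' b, M a b ≤ c * M a' b) :
    ∑ b, ⨆ a, M a b ≤ Fintype.card A * c / (Fintype.card A - 1 + c) := by
  have hden : 0 < (Fintype.card A : ℝ) - 1 + c := by
    have : (1 : ℝ) ≤ Fintype.card A := by exact_mod_cast Fintype.card_pos
    linarith
  rw [le_div_iff₀ hden]
  calc (∑ b, ⨆ a, M a b) * (Fintype.card A - 1 + c)
      = ∑ b, (Fintype.card A - 1 + c) * ⨆ a, M a b := by rw [sum_mul]; simp only [mul_comm]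
    _ ≤ ∑ b, c * ∑ a, M a b :=
      sum_le_sum fun b _ => card_sub_one_add_mul_iSup_le_mul_sum (hM · · b)
    _ = Fintype.card A * c := by rw [← mul_sum, sum_comm]; simp [hrow, mul_comm]

theorem one_le_sum_iSup {A B : Type*} [Finite A] [Nonempty A] [Fintype B]
    {M : A → B → ℝ} (hrow : ∀ a, ∑ b, M a b = 1) :
    1 ≤ ∑ b, ⨆ a, M a b := by
  obtain ⟨a⟩ := ‹Nonempty A›
  rw [← hrow a]
  exact sum_le_sum fun b _ => le_ciSup (Finite.bddAbove_range fun a => M a b) a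

theorem dp_individual_leakage_bound_general
    (Val : Type*) [Fintype Val] {Z : Type*} [Fintype Z]
    (hv : 2 ≤ Fintype.card Val)
    (ε : ℝ) (M : Val → Z → ℝ)
    (hrow : ∀ a, ∑ z, M a z = 1)
    (hdp : ∀ a a' : Val, ∀ z, M a z ≤ Real.exp ε * M a' z) :
    (∑ z, ⨆ a, M a z) ≤
      (Fintype.card Val : ℝ) * Real.exp ε /
        ((Fintype.card Val : ℝ) - 1 + Real.exp ε) ∧
    Real.logb 2 (∑ z, ⨆ a, M a z) ≤
      Real.logb 2 ((Fintype.card Val : ℝ) * Real.exp ε /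
        ((Fintype.card Val : ℝ) - 1 + Real.exp ε)) := by
  have : Nonempty Val := Fintype.card_pos_iff.mp (by omega)
  have hbound := sum_iSup_le_of_forall_le_mul hrow (Real.exp_pos ε) hdp
  have hpos : 0 < ∑ z, ⨆ a, M a z := by linarith [one_le_sum_iSup hrow]
  exact ⟨hbound, Real.logb_le_logb_of_le one_lt_two hpos hbound⟩

/-- **leakage about an individual.** Let `Val` be the set of `v ≥ 2`
possible values of a single individual, and let `M` be a channel matrix on `Val × Z`
satisfying `ε`-differential privacy with respect to the clique adjacency on `Val`
(i.e. `M a z ≤ e^ε * M a' z` for all pairs `a, a'`). Then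
`∑_z max_a M a z ≤ v e^ε / (v - 1 + e^ε)`; equivalently, the min-entropy leakage about
the individual (maximized by the uniform input distribution, where it equals
`log₂ (∑_z max_a M a z)`) is at most `log₂ (v e^ε / (v - 1 + e^ε))`. -/
theorem dp_individual_leakage_bound
    (Val : Type*) [Fintype Val] {Z : Type*} [Fintype Z]
    (hv : 2 ≤ Fintype.card Val)
    (ε : ℝ) (hε : 0 < ε) (M : Val → Z → ℝ)
    (hnn : ∀ a z, 0 ≤ M a z) (hrow : ∀ a, ∑ z, M a z = 1)
    (hdp : ∀ a a' : Val, ∀ z, M a z ≤ Real.exp ε * M a' z) :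
    (∑ z, ⨆ a, M a z) ≤
      (Fintype.card Val : ℝ) * Real.exp ε /
        ((Fintype.card Val : ℝ) - 1 + Real.exp ε) ∧
    Real.logb 2 (∑ z, ⨆ a, M a z) ≤
      Real.logb 2 ((Fintype.card Val : ℝ) * Real.exp ε /
        ((Fintype.card Val : ℝ) - 1 + Real.exp ε)) :=
  dp_individual_leakage_bound_general Val hv ε M hrow hdp
end

section
/- Let G = (Y, ∼) be a connected finite graph on the set of true query answers with n = |Y| vertices and graph distance dist, and assume G is distance-regular or VT⁺ (so the sphere sizes n_d = |{y' : dist(y, y') = d}| do not depend on y). Let Z be a finite set, ε > 0, and let H : Y → Z → ℝ be a channel matrix satisfying ε-differential privacy with respect to ∼. Then, for the uniform prior on Y and for every guessing function g : Z → Y (in particular the optimal one), the expected binary-gain utility satisfies U(Y, Z) = ∑_{z ∈ Z} (1/n) · H (g z) z ≤ 1 / (∑_{d=0}^{δ} n_d · exp(−ε d)), where δ is the diameter of G; equivalently ∑_{z} max_y H y z ≤ n / ∑_{j ∈ Y} exp(−ε · dist(y₀, j)) for any fixed y₀ ∈ Y. -/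
/-- A connected finite graph is distance-regular if there are intersection numbers
`b d` and `c d` such that every vertex `y` at graph distance `d` from `x` has exactly
`b d` neighbors at distance `d + 1` from `x` and exactly `c d` neighbors at distance
`d - 1` from `x`. -/
def IsDistRegular {V : Type*} [Fintype V] (G : SimpleGraph V) : Prop :=
  ∃ b c : ℕ → ℕ, ∀ x y : V, ∀ d : ℕ, G.dist x y = d →
    Nat.card {w : V // G.Adj y w ∧ G.dist x w = d + 1} = b d ∧
    Nat.card {w : V // G.Adj y w ∧ G.dist x w = d - 1} = c d

/-- A finite graph `G` with `n` vertices is `VT⁺` if there are `n` graph automorphisms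
`σ_0, …, σ_{n-1}` such that for every vertex `x` the map `i ↦ σ_i x` is a bijection onto
the vertex set. -/
def IsVTPlus {V : Type*} [Fintype V] (G : SimpleGraph V) : Prop :=
  ∃ σ : Fin (Fintype.card V) → (G ≃g G),
    ∀ x : V, Function.Bijective fun i => (σ i) x
/-!
Chaining the privacy constraint along a shortest path gives
`H y z ≤ exp (ε · dist y j) · H j z`, i.e. `H y z · ∑ⱼ exp (-ε · dist y j) ≤ ∑ⱼ H j z`.
On a distance-regular or VT⁺ graph the sphere sizes around `y`, hence the sum
`∑ⱼ exp (-ε · dist y j)`, do not depend on `y`. So every entry of a column of `H` is at most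
the column sum divided by this constant, and the column sums add up to `n`.
-/

open Finset

namespace SimpleGraph

variable {V : Type*} {G : SimpleGraph V} {u v x : V}

theorem Walk.le_exp_mul_length {ε : ℝ} {h : V → ℝ}
    (hadj : ∀ y y', G.Adj y y' → h y ≤ Real.exp ε * h y') (p : G.Walk u v) :
    h u ≤ Real.exp (ε * p.length) * h v := by
  induction p with
  | nil => simp
  | @cons a b c hab q ih =>
    calc h a ≤ Real.exp ε * h b := hadj a b hab
      _ ≤ Real.exp ε * (Real.exp (ε * q.length) * h c) := by gcongr
      _ = Real.exp (ε * (q.cons hab).length) * h c := by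
        rw [Walk.length_cons, ← mul_assoc, ← Real.exp_add]; push_cast; ring_nf

theorem Connected.le_exp_mul_dist (hconn : G.Connected) {ε : ℝ} {h : V → ℝ}
    (hadj : ∀ y y', G.Adj y y' → h y ≤ Real.exp ε * h y') (u v : V) :
    h u ≤ Real.exp (ε * G.dist u v) * h v := by
  obtain ⟨p, hp⟩ := hconn.exists_walk_length_eq_dist u v
  simpa [hp] using p.le_exp_mul_length hadj

theorem Connected.mul_sum_exp_neg_dist_le_sum [Fintype V] (hconn : G.Connected) {ε : ℝ}
    {h : V → ℝ} (hadj : ∀ y y', G.Adj y y' → h y ≤ Real.exp ε * h y') (x : V) :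
    h x * ∑ j, Real.exp (-ε * G.dist x j) ≤ ∑ j, h j := by
  rw [mul_sum]
  refine sum_le_sum fun j _ => ?_
  calc h x * Real.exp (-ε * G.dist x j)
      ≤ Real.exp (ε * G.dist x j) * h j * Real.exp (-ε * G.dist x j) := by
        gcongr; exact hconn.le_exp_mul_dist hadj x j
    _ = h j := by rw [mul_right_comm, ← Real.exp_add]; simp

theorem Connected.dist_iso (hconn : G.Connected) (φ : G ≃g G) (u v : V) :
    G.dist (φ u) (φ v) = G.dist u v := by
  have dist_map_le : ∀ (ψ : G ≃g G) (u v : V), G.dist (ψ u) (ψ v) ≤ G.dist u v := by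
    intro ψ u v
    obtain ⟨p, hp⟩ := hconn.exists_walk_length_eq_dist u v
    simpa [hp] using dist_le (p.map ψ.toHom)
  refine (dist_map_le φ u v).antisymm ?_
  simpa using dist_map_le φ.symm (φ u) (φ v)

theorem Connected.exists_adj_dist_eq_of_dist_eq_succ (hconn : G.Connected) {w : V} {d : ℕ}
    (hw : G.dist x w = d + 1) : ∃ y, G.Adj w y ∧ G.dist x y = d := by
  obtain ⟨p, hp⟩ := hconn.exists_walk_length_eq_dist w x
  rw [dist_comm, hw] at hp
  cases p with
  | nil => simp at hp
  | @cons _ y _ hwy q =>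
    refine ⟨y, hwy, le_antisymm ?_ ?_⟩
    · simpa [dist_comm, show q.length = d by simpa using hp] using dist_le q
    · have := hconn.dist_triangle (u := x) (v := y) (w := w)
      rw [hw, dist_comm (u := y), dist_eq_one_iff_adj.mpr hwy] at this
      omega

section Finite

variable [Fintype V]

noncomputable def distSphere (G : SimpleGraph V) (x : V) (d : ℕ) : Finset V :=
  {j | G.dist x j = d}

@[simp]
theorem mem_distSphere {d : ℕ} : v ∈ G.distSphere x d ↔ G.dist x v = d := by
  simp [distSphere]

theorem Connected.distSphere_zero (hconn : G.Connected) (x : V) : G.distSphere x 0 = {x} := by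
  ext j
  simp [(hconn x j).dist_eq_zero_iff, eq_comm]

theorem Connected.dist_lt_card (hconn : G.Connected) (x y : V) :
    G.dist x y < Fintype.card V := by
  obtain ⟨p, hp, hl⟩ := hconn.exists_path_of_dist x y
  exact hl ▸ hp.length_lt

theorem Connected.sum_comp_dist {M : Type*} [AddCommMonoid M] (hconn : G.Connected)
    (f : ℕ → M) (x : V) :
    ∑ j, f (G.dist x j) = ∑ d ∈ range (Fintype.card V), #(G.distSphere x d) • f d := by
  rw [← sum_fiberwise_of_maps_to fun j _ => mem_range.mpr (hconn.dist_lt_card x j)]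
  refine sum_congr rfl fun d _ => ?_
  rw [← sum_const]
  exact sum_congr (by ext; simp [distSphere]) fun j hj => by rw [(mem_filter.mp hj).2]

section DistRegular

variable {b c : ℕ → ℕ} (hbc : ∀ x y : V, ∀ d : ℕ, G.dist x y = d →
    Nat.card {w : V // G.Adj y w ∧ G.dist x w = d + 1} = b d ∧
    Nat.card {w : V // G.Adj y w ∧ G.dist x w = d - 1} = c d)
include hbc

theorem card_distSphere_mul_eq (x : V) (d : ℕ) :
    #(G.distSphere x d) * b d = #(G.distSphere x (d + 1)) * c (d + 1) := by
  classical
  refine card_mul_eq_card_mul G.Adj (fun y hy => ?_) (fun w hw => ?_)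
  · rw [← (hbc x y d (mem_distSphere.mp hy)).1, Nat.card_eq_fintype_card, Fintype.card_subtype]
    congr 1; ext; simp [bipartiteAbove, and_comm]
  · rw [← (hbc x w (d + 1) (mem_distSphere.mp hw)).2, Nat.card_eq_fintype_card,
      Fintype.card_subtype]
    congr 1; ext; simp [bipartiteBelow, and_comm, G.adj_comm]

theorem Connected.pos_of_mem_distSphere_succ (hconn : G.Connected) {w : V} {d : ℕ}
    (hw : w ∈ G.distSphere x (d + 1)) : 0 < c (d + 1) := by
  obtain ⟨y, hwy, hy⟩ := hconn.exists_adj_dist_eq_of_dist_eq_succ (mem_distSphere.mp hw)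
  have card_eq := (hbc x w (d + 1) (mem_distSphere.mp hw)).2
  rw [Nat.add_sub_cancel] at card_eq
  have : Nonempty {y // G.Adj w y ∧ G.dist x y = d} := ⟨⟨y, hwy, hy⟩⟩
  exact card_eq ▸ Nat.card_pos

end DistRegular

end Finite

end SimpleGraph

section

open SimpleGraph

variable {V : Type*} [Fintype V] {G : SimpleGraph V}

theorem IsDistRegular.card_distSphere_eq (hreg : IsDistRegular G) (hconn : G.Connected)
    (d : ℕ) (x x' : V) : #(G.distSphere x d) = #(G.distSphere x' d) := by
  obtain ⟨b, c, hbc⟩ := hreg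
  induction d with
  | zero => simp [hconn.distSphere_zero]
  | succ d ih =>
    by_cases hc : c (d + 1) = 0
    · have empty : ∀ u, G.distSphere u (d + 1) = ∅ := fun u =>
        eq_empty_of_forall_notMem fun w hw => hc.not_gt (hconn.pos_of_mem_distSphere_succ hbc hw)
      simp [empty]
    · refine Nat.eq_of_mul_eq_mul_right (Nat.pos_of_ne_zero hc) ?_
      rw [← card_distSphere_mul_eq hbc, ← card_distSphere_mul_eq hbc, ih]

theorem IsVTPlus.sum_comp_dist_eq {M : Type*} [AddCommMonoid M] (hvt : IsVTPlus G)
    (hconn : G.Connected) (f : ℕ → M) (x x' : V) :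
    ∑ j, f (G.dist x j) = ∑ j, f (G.dist x' j) := by
  obtain ⟨σ, hσ⟩ := hvt
  obtain ⟨i, rfl⟩ := (hσ x).2 x'
  exact Fintype.sum_equiv (σ i).toEquiv _ _ fun j => by simp [hconn.dist_iso]

end

theorem dp_utility_bound_general {Y Z : Type*} [Fintype Y] [Fintype Z]
    (G : SimpleGraph Y) (hconn : G.Connected)
    (hreg : IsDistRegular G ∨ IsVTPlus G)
    (ε : ℝ) (H : Y → Z → ℝ)
    (hrow : ∀ y, ∑ z, H y z = 1)
    (hdp : ∀ y y', G.Adj y y' → ∀ z, H y z ≤ Real.exp ε * H y' z) :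
    ∀ y₀ : Y,
      (∀ g : Z → Y,
        (∑ z, (1 / (Fintype.card Y : ℝ)) * H (g z) z) ≤
          1 / ∑ j, Real.exp (-ε * (G.dist y₀ j : ℝ))) ∧
      (∑ z, ⨆ y, H y z) ≤
        (Fintype.card Y : ℝ) / ∑ j, Real.exp (-ε * (G.dist y₀ j : ℝ)) := by
  intro y₀
  have : Nonempty Y := ⟨y₀⟩
  set S := ∑ j, Real.exp (-ε * (G.dist y₀ j : ℝ))
  have sum_eq_S : ∀ y, ∑ j, Real.exp (-ε * (G.dist y j : ℝ)) = S := fun y => by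
    rcases hreg with hdr | hvt
    · simp only [S, hconn.sum_comp_dist fun d : ℕ => Real.exp (-ε * d),
        hdr.card_distSphere_eq hconn _ y y₀]
    · exact hvt.sum_comp_dist_eq hconn (fun d : ℕ => Real.exp (-ε * d)) y y₀
  have hS : 0 < S := sum_pos (fun j _ => Real.exp_pos _) univ_nonempty
  have le_colSum : ∀ y z, H y z ≤ (∑ j, H j z) / S := fun y z => by
    rw [le_div_iff₀ hS, ← sum_eq_S y]
    exact hconn.mul_sum_exp_neg_dist_le_sum (fun a b hab => hdp a b hab z) y
  have sum_iSup_le : ∑ z, ⨆ y, H y z ≤ Fintype.card Y / S :=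
    calc ∑ z, ⨆ y, H y z ≤ ∑ z, (∑ j, H j z) / S :=
          sum_le_sum fun z _ => ciSup_le fun y => le_colSum y z
      _ = Fintype.card Y / S := by rw [← sum_div, sum_comm]; simp [hrow]
  refine ⟨fun g => ?_, sum_iSup_le⟩
  have hn : (0 : ℝ) < Fintype.card Y := Nat.cast_pos.mpr Fintype.card_pos
  calc ∑ z, 1 / (Fintype.card Y : ℝ) * H (g z) z
      = 1 / Fintype.card Y * ∑ z, H (g z) z := (mul_sum _ _ _).symm
    _ ≤ 1 / Fintype.card Y * (Fintype.card Y / S) := by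
      gcongr
      exact (sum_le_sum fun z _ => le_ciSup (Finite.bddAbove_range _) (g z)).trans sum_iSup_le
    _ = 1 / S := by field_simp

/-- **bound on the utility.** Let `G` be a connected finite graph on the
set `Y` of true answers, with `n = |Y|`, which is distance-regular or `VT⁺`, and let
`H : Y → Z → ℝ` be an `ε`-differentially private channel matrix. Then for the uniform
prior on `Y`, every guessing function `g : Z → Y` has expected binary-gain utility
`∑_z (1/n) * H (g z) z ≤ 1 / ∑_j exp (-ε * dist y₀ j)` (for any fixed `y₀`);
equivalently `∑_z max_y H y z ≤ n / ∑_j exp (-ε * dist y₀ j)`. -/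
theorem dp_utility_bound {Y Z : Type*} [Fintype Y] [Fintype Z]
    (G : SimpleGraph Y) (hconn : G.Connected)
    (hreg : IsDistRegular G ∨ IsVTPlus G)
    (ε : ℝ) (hε : 0 < ε) (H : Y → Z → ℝ)
    (hnn : ∀ y z, 0 ≤ H y z) (hrow : ∀ y, ∑ z, H y z = 1)
    (hdp : ∀ y y', G.Adj y y' → ∀ z, H y z ≤ Real.exp ε * H y' z) :
    ∀ y₀ : Y,
      (∀ g : Z → Y,
        (∑ z, (1 / (Fintype.card Y : ℝ)) * H (g z) z) ≤
          1 / ∑ j, Real.exp (-ε * (G.dist y₀ j : ℝ))) ∧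
      (∑ z, ⨆ y, H y z) ≤
        (Fintype.card Y : ℝ) / ∑ j, Real.exp (-ε * (G.dist y₀ j : ℝ)) :=
  dp_utility_bound_general G hconn hreg ε H hrow hdp
end

section
/- Let G = (Y, ∼) be a connected finite graph with n = |Y| vertices and graph distance dist, and assume the sphere sizes are vertex-independent: for all y, y' ∈ Y and all d, |{j : dist(y, j) = d}| = |{j : dist(y', j) = d}| = n_d (as holds for distance-regular and VT⁺ graphs). Fix ε > 0, set γ = 1 / (∑_{d=0}^{δ} n_d · exp(−ε d)) where δ is the diameter of G, and define H : Y → Y → ℝ by H i j = γ · exp(−ε · dist(i, j)). Then: (i) H is a channel matrix (each row sums to 1); (ii) H satisfies ε-differential privacy with respect to ∼; (iii) ∑_{j ∈ Y} max_{i ∈ Y} H i j = n · γ, so for the uniform prior on Y the expected binary-gain utility of H under the optimal guess equals γ, which is the maximal utility among ε-differentially private mechanisms. -/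
/-!
A differentially private channel can lose at most a factor `exp (ε d)` along a path of
length `d`, so any row entry `H' y z` is bounded by `exp (ε * dist y y') * H' y' z`.
Summing `H' (g z) z * exp (-ε * dist (g z) y) ≤ H' y z` over `y` and `z`, and using that
`∑ y, exp (-ε * dist y₀ y) = 1 / γ` does not depend on `y₀` (equal sphere sizes), shows
that the success probability `∑ z, H' (g z) z` is at most `n * γ`. The exponential
mechanism attains this bound, since each of its columns has maximum `γ`, on the diagonal.
-/

open Finset Real

theorem Fintype.sum_comp_eq_of_card_fiber_eq {α β M : Type*} [Fintype α] [AddCommMonoid M]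
    {u v : α → β} (h : ∀ b, Nat.card {a // u a = b} = Nat.card {a // v a = b})
    (f : β → M) : ∑ a, f (u a) = ∑ a, f (v a) := by
  let e : α ≃ α := Equiv.ofFiberEquiv fun b => (Finite.card_eq.1 (h b)).some
  exact Fintype.sum_equiv e _ _ fun a => congrArg f (Equiv.ofFiberEquiv_map _ a).symm

namespace SimpleGraph

variable {V : Type*} {G : SimpleGraph V} {ε : ℝ} {f : V → ℝ}

theorem Walk.le_exp_mul_length_mul (hf : ∀ u v, G.Adj u v → f u ≤ exp ε * f v)
    {u v : V} (p : G.Walk u v) : f u ≤ exp (ε * p.length) * f v := by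
  induction p with
  | nil => simp
  | @cons u w v huw p ih =>
    calc f u ≤ exp ε * f w := hf u w huw
      _ ≤ exp ε * (exp (ε * p.length) * f v) := by gcongr
      _ = exp (ε * (cons huw p).length) * f v := by
        rw [Walk.length_cons, Nat.cast_succ, mul_add_one, exp_add]; ring

theorem Reachable.le_exp_mul_dist_mul (hf : ∀ u v, G.Adj u v → f u ≤ exp ε * f v)
    {u v : V} (h : G.Reachable u v) : f u ≤ exp (ε * G.dist u v) * f v := by
  obtain ⟨p, hp⟩ := h.exists_walk_length_eq_dist
  simpa [hp] using p.le_exp_mul_length_mul hf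

theorem Connected.mul_sum_exp_neg_dist_le_sum_s19 [Fintype V] (hG : G.Connected)
    (hf : ∀ u v, G.Adj u v → f u ≤ exp ε * f v) (u : V) :
    f u * ∑ v, exp (-ε * G.dist u v) ≤ ∑ v, f v := by
  rw [mul_sum]
  refine sum_le_sum fun v _ => ?_
  calc f u * exp (-ε * G.dist u v)
      ≤ exp (ε * G.dist u v) * f v * exp (-ε * G.dist u v) := by
        gcongr; exact (hG u v).le_exp_mul_dist_mul hf
    _ = f v := by rw [mul_right_comm, ← exp_add, neg_mul, add_neg_cancel, exp_zero, one_mul]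

theorem Connected.sum_guess_mul_le_card [Fintype V] {Z : Type*} [Fintype Z] (hG : G.Connected)
    {H' : V → Z → ℝ} (hrow : ∀ y, ∑ z, H' y z = 1)
    (hdp : ∀ y y', G.Adj y y' → ∀ z, H' y z ≤ exp ε * H' y' z)
    {S : ℝ} (hS : ∀ y, ∑ v, exp (-ε * G.dist y v) = S) (g : Z → V) :
    (∑ z, H' (g z) z) * S ≤ Fintype.card V := calc
  _ = ∑ z, H' (g z) z * ∑ y, exp (-ε * G.dist (g z) y) := by simp only [sum_mul, hS]
  _ ≤ ∑ z, ∑ y, H' y z := sum_le_sum fun z _ =>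
    hG.mul_sum_exp_neg_dist_le_sum_s19 (fun y y' h => hdp y y' h z) (g z)
  _ = Fintype.card V := by rw [sum_comm]; simp [hrow]

theorem Adj.exp_neg_dist_le_exp_mul (hε : 0 ≤ ε) {u u' : V} (h : G.Adj u u') (w : V) :
    exp (-ε * G.dist u w) ≤ exp ε * exp (-ε * G.dist u' w) := by
  have hdist : G.dist u' w ≤ G.dist u w + 1 := by
    rw [dist_comm, dist_comm (u := u)]
    rcases h.diff_dist_adj (u := w) with h' | h' | h' <;> omega
  rw [← exp_add, exp_le_exp]
  have : (G.dist u' w : ℝ) ≤ G.dist u w + 1 := by exact_mod_cast hdist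
  nlinarith

theorem iSup_exp_neg_dist [Finite V] (hε : 0 ≤ ε) (w : V) :
    ⨆ u, exp (-ε * G.dist u w) = 1 := by
  have : Nonempty V := ⟨w⟩
  refine le_antisymm (ciSup_le fun u => ?_) ?_
  · rw [exp_le_one_iff]
    exact mul_nonpos_of_nonpos_of_nonneg (neg_nonpos.2 hε) (Nat.cast_nonneg _)
  · exact le_ciSup_of_le (Finite.bddAbove_range _) w (by simp)

end SimpleGraph

open SimpleGraph

/-- **the optimal mechanism.** Let `G` be a connected finite graph on
`Y` with vertex-independent sphere sizes (as holds for distance-regular and `VT⁺`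
graphs), fix `ε > 0`, `y₀ ∈ Y`, and set `γ = 1 / ∑_j exp (-ε * dist y₀ j)`
(`= 1 / ∑_{d=0}^δ n_d e^{-εd}`). Define `H i j = γ * exp (-ε * dist i j)`. Then `H` is
a channel matrix, it satisfies `ε`-differential privacy with respect to adjacency in
`G`, and `∑_j max_i H i j = n * γ`; hence for the uniform prior on `Y` the expected
binary-gain utility of `H` under the optimal guess equals `γ`, which is the maximal
utility among all `ε`-differentially private mechanisms. -/
theorem dp_optimal_utility_mechanism {Y : Type*} [Fintype Y]
    (G : SimpleGraph Y) (hconn : G.Connected)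
    (hsphere : ∀ y y' : Y, ∀ d : ℕ,
      Nat.card {j : Y // G.dist y j = d} = Nat.card {j : Y // G.dist y' j = d})
    (ε : ℝ) (hε : 0 < ε) (y₀ : Y)
    (γ : ℝ) (hγ : γ = 1 / ∑ j, Real.exp (-ε * (G.dist y₀ j : ℝ)))
    (H : Y → Y → ℝ)
    (hH : ∀ i j, H i j = γ * Real.exp (-ε * (G.dist i j : ℝ))) :
    (∀ i j, 0 ≤ H i j) ∧
    (∀ i, ∑ j, H i j = 1) ∧
    (∀ i i', G.Adj i i' → ∀ j, H i j ≤ Real.exp ε * H i' j) ∧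
    (∑ j, ⨆ i, H i j) = (Fintype.card Y : ℝ) * γ ∧
    (1 / (Fintype.card Y : ℝ)) * (∑ j, ⨆ i, H i j) = γ ∧
    (∀ (Z : Type) (_ : Fintype Z) (H' : Y → Z → ℝ),
      (∀ y z, 0 ≤ H' y z) → (∀ y, ∑ z, H' y z = 1) →
      (∀ y y', G.Adj y y' → ∀ z, H' y z ≤ Real.exp ε * H' y' z) →
      ∀ g : Z → Y, (∑ z, (1 / (Fintype.card Y : ℝ)) * H' (g z) z) ≤ γ) := by
  obtain rfl : H = fun i j => γ * exp (-ε * G.dist i j) := funext₂ hH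
  set S := ∑ j, exp (-ε * (G.dist y₀ j : ℝ))
  have hS (y : Y) : ∑ j, exp (-ε * (G.dist y j : ℝ)) = S :=
    Fintype.sum_comp_eq_of_card_fiber_eq (hsphere y y₀) fun d => exp (-ε * d)
  have hSpos : 0 < S := sum_pos (fun _ _ => exp_pos _) ⟨y₀, mem_univ _⟩
  have hγpos : 0 < γ := hγ ▸ one_div_pos.2 hSpos
  have hn : (0 : ℝ) < Fintype.card Y := by
    have := hconn.nonempty; exact_mod_cast Fintype.card_pos
  have hsum : ∑ j, ⨆ i, γ * exp (-ε * G.dist i j) = Fintype.card Y * γ := by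
    simp only [← Real.mul_iSup_of_nonneg hγpos.le, iSup_exp_neg_dist hε.le, mul_one, sum_const,
      card_univ, nsmul_eq_mul]
  have hHrow (i : Y) : ∑ j, γ * exp (-ε * G.dist i j) = 1 := by
    rw [← mul_sum, hS, hγ, one_div_mul_cancel hSpos.ne']
  refine ⟨fun i j => by positivity, hHrow, fun i i' h j => ?_, hsum, by rw [hsum]; field_simp, ?_⟩
  · rw [mul_left_comm]
    exact mul_le_mul_of_nonneg_left (h.exp_neg_dist_le_exp_mul hε.le j) hγpos.le
  intro Z _ H' _ hrow hdp g
  have hbound := hconn.sum_guess_mul_le_card hrow hdp hS g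
  rw [← mul_sum, hγ, one_div_mul_eq_div, div_le_div_iff₀ hn hSpos]
  linarith
end
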